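/- arXiv:math/0602643 — 2 statements merged into one kernel-verified Lean document; each statement's English description precedes it below -/
import Mathlib

section
/- (Theorem 3.2.) Let 0 = x₀ < ⋯ < x_{n+1} = 1 be a grid, ε, b, c reals, f : [0,1] → ℝ continuous, A = (a(φⱼ, φᵢ))_{1≤i,j≤n} invertible, and Uⁿ ∈ ℝⁿ the solution of A·Uⁿ = F with Fⱼ = ∫₀¹ f·φⱼ. Let xₙ < s₁ < s₂ < ⋯ < s_m < 1 and let (u₁, …, uₙ, u_{s₁}, …, u_{s_m}) solve the refined Galerkin system with nodal basis φ₁, …, φ_{n−1}, φ̃ₙ, φ_{s₁}, …, φ_{s_m}. Then Uⁿ − (u₁, …, uₙ) = C·A⁻¹eₙ, where eₙ = (0, …, 0, 1)ᵗ, pᵢ = (1 − sᵢ)/(1 − xₙ), and C = Σ_{i=1}^{m} (u_{sᵢ} − pᵢ·uₙ)·a(φ_{sᵢ}, φₙ). Consequently, for each 2 ≤ i ≤ n for which a sign change (Uⁿ_{i−1} − u_{i−1})(Uⁿᵢ − uᵢ) < 0 occurs, the intersection point of the two piecewise linear solutions in (x_{i−1}, xᵢ) is independent of m and of the distribution of the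 added points s₁, …, s_m. -/
open Matrix MeasureTheory

/-- The hat (tent) function with support `[l, r]`, peak value 1 at `m`,
equal to `(t - l)/(m - l)` on `[l, m]` and `(r - t)/(r - m)` on `[m, r]`. -/
noncomputable def hat3 (l m r t : ℝ) : ℝ :=
  if l ≤ t ∧ t ≤ m then (t - l) / (m - l)
  else if m ≤ t ∧ t ≤ r then (r - t) / (r - m)
  else 0

/-- The piecewise derivative of `hat3 l m r`. -/
noncomputable def hat3D (l m r t : ℝ) : ℝ :=
  if l < t ∧ t < m then 1 / (m - l)
  else if m < t ∧ t < r then -(1 / (r - m))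
  else 0

/-- The hat function at node `i` of the grid `y`. -/
noncomputable def hatFn (y : ℕ → ℝ) (i : ℕ) : ℝ → ℝ :=
  hat3 (y (i - 1)) (y i) (y (i + 1))

/-- The piecewise derivative of the hat function at node `i` of the grid `y`. -/
noncomputable def hatDeriv (y : ℕ → ℝ) (i : ℕ) : ℝ → ℝ :=
  hat3D (y (i - 1)) (y i) (y (i + 1))

/-- The bilinear form `a(u, v) = ε∫₀¹ u'v' + b∫₀¹ u v' + c∫₀¹ u v`, where the (piecewise)
derivatives `u'`, `v'` are supplied explicitly as `uD`, `vD`. -/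
noncomputable def bform (ε b c : ℝ) (u uD v vD : ℝ → ℝ) : ℝ :=
  ε * (∫ t in (0:ℝ)..1, uD t * vD t)
    + b * (∫ t in (0:ℝ)..1, u t * vD t)
    + c * (∫ t in (0:ℝ)..1, u t * v t)

/-- `y` is a grid `0 = y₀ < y₁ < ⋯ < y_{N+1} = 1` with `N` interior nodes. -/
def IsGrid (y : ℕ → ℝ) (N : ℕ) : Prop :=
  y 0 = 0 ∧ y (N + 1) = 1 ∧ ∀ i ≤ N, y i < y (i + 1)

/-- The load `∫₀¹ f·φⱼ` for the grid `y`. -/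
noncomputable def load (f : ℝ → ℝ) (y : ℕ → ℝ) (j : ℕ) : ℝ :=
  ∫ t in (0:ℝ)..1, f t * hatFn y j t

/-- `w` (as coefficients at the interior nodes `y 1, …, y N`) is a Galerkin finite element
solution on the grid `y`: its `a`-pairing with every nodal basis hat function equals the
corresponding load. -/
def IsGalerkinSol (ε b c : ℝ) (f : ℝ → ℝ) (y : ℕ → ℝ) (N : ℕ) (w : ℕ → ℝ) : Prop :=
  ∀ j, 1 ≤ j → j ≤ N →
    (∑ i ∈ Finset.Icc 1 N,
        w i * bform ε b c (hatFn y i) (hatDeriv y i) (hatFn y j) (hatDeriv y j))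
      = load f y j

/-- The stiffness matrix `A` with `A i j = a(φ_{j+1}, φ_{i+1})` (`0`-based `Fin` indices
corresponding to the interior nodes `y 1, …, y n`). -/
noncomputable def stiff (ε b c : ℝ) (y : ℕ → ℝ) (n : ℕ) : Matrix (Fin n) (Fin n) ℝ :=
  fun i j => bform ε b c (hatFn y ((j : ℕ) + 1)) (hatDeriv y ((j : ℕ) + 1))
      (hatFn y ((i : ℕ) + 1)) (hatDeriv y ((i : ℕ) + 1))

/-- The affine function on `[α, β]` through `(α, ya)` and `(β, yb)`. -/
noncomputable def affInterp (α β ya yb t : ℝ) : ℝ :=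
  ya + (yb - ya) * (t - α) / (β - α)

/-! On `[xₙ, 1]` the coarse hat `φₙ` is affine, so it coincides with its interpolant on the
refined grid, `φₙ = Σ_{i=n}^{n+m} pᵢ φ_{yᵢ}` with `pᵢ = (1 - yᵢ)/(1 - xₙ)` (so `pₙ = 1`), and its
piecewise derivative does too away from the nodes; the coarse hats `φⱼ`, `j < n`, are refined
hats. Expanding the coarse stiffness entries and loads through this identity and using the
refined Galerkin equations shows that `u = (u₁, …, uₙ)` solves the coarse system up to a defect
in the last equation only: the refined hats `φ_{sₖ}` meet no coarse test function but `φₙ`, and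
the defect is `C`. Hence `A (Uⁿ - u) = C eₙ`. Every refinement thus moves the nodal values along
the same vector `v = A⁻¹eₙ`, so on `[x_{i-1}, xᵢ]` the two interpolants cross where the affine
interpolant of `v` vanishes. -/

section HatFunctions

variable {l m r t : ℝ}

lemma measurable_hat3 (l m r : ℝ) : Measurable (hat3 l m r) := by
  unfold hat3
  exact Measurable.ite (measurableSet_Icc (a := l) (b := m)) (by fun_prop)
    (Measurable.ite (measurableSet_Icc (a := m) (b := r)) (by fun_prop) (by fun_prop))

lemma measurable_hat3D (l m r : ℝ) : Measurable (hat3D l m r) := by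
  unfold hat3D
  exact Measurable.ite (measurableSet_Ioo (a := l) (b := m)) (by fun_prop)
    (Measurable.ite (measurableSet_Ioo (a := m) (b := r)) (by fun_prop) (by fun_prop))

lemma abs_hat3_le_one (l m r t : ℝ) : |hat3 l m r t| ≤ 1 := by
  unfold hat3
  split_ifs with h₁ h₂
  · rw [abs_of_nonneg (div_nonneg (by linarith) (by linarith))]
    exact div_le_one_of_le₀ (by linarith) (by linarith)
  · rw [abs_of_nonneg (div_nonneg (by linarith) (by linarith))]
    exact div_le_one_of_le₀ (by linarith) (by linarith)
  · simp

lemma abs_hat3D_le (l m r t : ℝ) : |hat3D l m r t| ≤ |1 / (m - l)| + |1 / (r - m)| := by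
  unfold hat3D
  split_ifs <;> simp [abs_nonneg, add_nonneg]

lemma hat3_of_le_left (hlm : l < m) (ht : t ≤ l) : hat3 l m r t = 0 := by
  unfold hat3
  split_ifs with h₁ h₂
  · rw [le_antisymm ht h₁.1, sub_self, zero_div]
  · linarith [h₂.1]
  · rfl

lemma hat3_of_right_le (hmr : m < r) (ht : r ≤ t) : hat3 l m r t = 0 := by
  unfold hat3
  split_ifs with h₁ h₂
  · linarith [h₁.2]
  · rw [le_antisymm h₂.2 ht, sub_self, zero_div]
  · rfl

lemma hat3D_of_le_left (hlm : l ≤ m) (ht : t ≤ l) : hat3D l m r t = 0 := by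
  unfold hat3D
  split_ifs with h₁ h₂
  · linarith [h₁.1]
  · linarith [h₂.1]
  · rfl

lemma hat3D_of_right_le (hmr : m ≤ r) (ht : r ≤ t) : hat3D l m r t = 0 := by
  unfold hat3D
  split_ifs with h₁ h₂
  · linarith [h₁.2]
  · linarith [h₂.2]
  · rfl

lemma hat3_of_mem_Icc_left (ht : t ∈ Set.Icc l m) : hat3 l m r t = (t - l) / (m - l) :=
  if_pos ht

lemma hat3_of_mem_Ioc_right (ht : t ∈ Set.Ioc m r) : hat3 l m r t = (r - t) / (r - m) := by
  unfold hat3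
  rw [if_neg fun h => (not_le.2 ht.1) h.2, if_pos ⟨ht.1.le, ht.2⟩]

lemma hat3D_of_mem_Ioo_left (ht : t ∈ Set.Ioo l m) : hat3D l m r t = 1 / (m - l) :=
  if_pos ht

lemma hat3D_of_mem_Ioo_right (ht : t ∈ Set.Ioo m r) : hat3D l m r t = -(1 / (r - m)) := by
  unfold hat3D
  rw [if_neg fun h => (not_lt.2 ht.1.le) h.2, if_pos (show m < t ∧ t < r from ht)]

lemma hat3_congr_right {r' : ℝ} (hlm : l ≤ m) (ht : t ≤ m) : hat3 l m r t = hat3 l m r' t := by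
  unfold hat3
  by_cases hl : l ≤ t
  · rw [if_pos ⟨hl, ht⟩, if_pos ⟨hl, ht⟩]
  · have : ¬(m ≤ t) := fun h => hl (hlm.trans h)
    simp only [hl, this, false_and, if_false]

lemma hat3D_congr_right {r' : ℝ} (ht : t ≤ m) : hat3D l m r t = hat3D l m r' t := by
  unfold hat3D
  have : ¬(m < t) := not_lt.2 ht
  simp only [this, false_and, if_false]

end HatFunctions

lemma Finset.sum_Icc_self_add {M : Type*} [AddCommMonoid M] (g : ℕ → M) (n m : ℕ) :
    ∑ i ∈ Finset.Icc n (n + m), g i = g n + ∑ k ∈ Finset.Icc 1 m, g (n + k) := by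
  induction m with
  | zero => simp
  | succ m ih =>
    rw [← add_assoc, Finset.sum_Icc_succ_top (by omega), ih, Finset.sum_Icc_succ_top (by omega),
      add_assoc, add_assoc]

section Grid

variable {y : ℕ → ℝ} {N i : ℕ} {t : ℝ}

lemma IsGrid.lt_of_lt (hy : IsGrid y N) {i j : ℕ} (hij : i < j) (hj : j ≤ N + 1) :
    y i < y j := by
  induction j, hij using Nat.le_induction with
  | base => exact hy.2.2 i (by omega)
  | succ k hik ih => exact (ih (by omega)).trans (hy.2.2 k (by omega))

lemma IsGrid.le_of_le (hy : IsGrid y N) {i j : ℕ} (hij : i ≤ j) (hj : j ≤ N + 1) :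
    y i ≤ y j :=
  hij.eq_or_lt.elim (fun h => h ▸ le_rfl) fun h => (hy.lt_of_lt h hj).le

lemma exists_mem_Ioc_nodes (y : ℕ → ℝ) {a b : ℕ} (hab : a ≤ b) (ha : y a < t) (hb : t ≤ y b) :
    ∃ j, a ≤ j ∧ j < b ∧ t ∈ Set.Ioc (y j) (y (j + 1)) := by
  induction b, hab using Nat.le_induction with
  | base => exact absurd hb (not_le.2 ha)
  | succ k hak ih =>
    by_cases htk : t ≤ y k
    · obtain ⟨j, haj, hjk, htj⟩ := ih htk
      exact ⟨j, haj, by omega, htj⟩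
    · exact ⟨k, hak, by omega, not_le.1 htk, hb⟩

lemma hatFn_eq_zero_of_le (hy : IsGrid y N) (hi : 1 ≤ i) (hiN : i ≤ N + 1)
    (ht : t ≤ y (i - 1)) : hatFn y i t = 0 :=
  hat3_of_le_left (hy.lt_of_lt (by omega) hiN) ht

lemma hatFn_eq_zero_of_ge (hy : IsGrid y N) (hiN : i ≤ N) (ht : y (i + 1) ≤ t) :
    hatFn y i t = 0 :=
  hat3_of_right_le (hy.lt_of_lt (by omega) (by omega)) ht

lemma hatDeriv_eq_zero_of_le (hy : IsGrid y N) (hiN : i ≤ N + 1) (ht : t ≤ y (i - 1)) :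
    hatDeriv y i t = 0 :=
  hat3D_of_le_left (hy.le_of_le (by omega) hiN) ht

lemma hatDeriv_eq_zero_of_ge (hy : IsGrid y N) (hiN : i ≤ N) (ht : y (i + 1) ≤ t) :
    hatDeriv y i t = 0 :=
  hat3D_of_right_le (hy.le_of_le (by omega) (by omega)) ht

lemma sum_mul_hatFn_of_mem_Ioc (hy : IsGrid y N) (q : ℕ → ℝ) {a j : ℕ} (haj : a ≤ j)
    (hjN : j ≤ N) (ht : t ∈ Set.Ioc (y j) (y (j + 1))) :
    ∑ i ∈ Finset.Icc a (N + 1), q i * hatFn y i t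
      = (q j * (y (j + 1) - t) + q (j + 1) * (t - y j)) / (y (j + 1) - y j) := by
  rw [Finset.sum_eq_add_of_mem j (j + 1) (by simp only [Finset.mem_Icc]; omega)
    (by simp only [Finset.mem_Icc]; omega) (by omega)]
  · have hj : hatFn y j t = (y (j + 1) - t) / (y (j + 1) - y j) := hat3_of_mem_Ioc_right ht
    have hj₁ : hatFn y (j + 1) t = (t - y j) / (y (j + 1) - y j) := by
      simp only [hatFn, add_tsub_cancel_right]
      exact hat3_of_mem_Icc_left ⟨ht.1.le, ht.2⟩
    rw [hj, hj₁]
    ring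
  · intro i hi hij
    simp only [Finset.mem_Icc] at hi
    rcases Nat.lt_or_gt_of_ne hij.1 with h | h
    · rw [hatFn_eq_zero_of_ge hy (by omega) ((hy.le_of_le (by omega) (by omega)).trans ht.1.le),
        mul_zero]
    · rw [hatFn_eq_zero_of_le hy (by omega) hi.2 (ht.2.trans (hy.le_of_le (by omega) (by omega))),
        mul_zero]

lemma sum_mul_hatDeriv_of_mem_Ioo (hy : IsGrid y N) (q : ℕ → ℝ) {a j : ℕ} (haj : a ≤ j)
    (hjN : j ≤ N) (ht : t ∈ Set.Ioo (y j) (y (j + 1))) :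
    ∑ i ∈ Finset.Icc a (N + 1), q i * hatDeriv y i t
      = (q (j + 1) - q j) / (y (j + 1) - y j) := by
  rw [Finset.sum_eq_add_of_mem j (j + 1) (by simp only [Finset.mem_Icc]; omega)
    (by simp only [Finset.mem_Icc]; omega) (by omega)]
  · have hj : hatDeriv y j t = -(1 / (y (j + 1) - y j)) := hat3D_of_mem_Ioo_right ht
    have hj₁ : hatDeriv y (j + 1) t = 1 / (y (j + 1) - y j) := by
      simp only [hatDeriv, add_tsub_cancel_right]
      exact hat3D_of_mem_Ioo_left ht
    rw [hj, hj₁]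
    ring
  · intro i hi hij
    simp only [Finset.mem_Icc] at hi
    rcases Nat.lt_or_gt_of_ne hij.1 with h | h
    · rw [hatDeriv_eq_zero_of_ge hy (by omega)
        ((hy.le_of_le (by omega) (by omega)).trans ht.1.le), mul_zero]
    · rw [hatDeriv_eq_zero_of_le hy hi.2 (ht.2.le.trans (hy.le_of_le (by omega) (by omega))),
        mul_zero]

end Grid

section BilinearForm

variable {ι : Type*} {s : Finset ι} {q : ι → ℝ} {ε b c α β : ℝ}

lemma MeasureTheory.MemLp.intervalIntegrable {g : ℝ → ℝ} (hg : MemLp g ⊤) :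
    IntervalIntegrable g volume α β :=
  ⟨(hg.restrict _).integrable le_top, (hg.restrict _).integrable le_top⟩

lemma IntervalIntegrable.mul_memLp_top {f g : ℝ → ℝ} (hf : IntervalIntegrable f volume α β)
    (hg : MemLp g ⊤) : IntervalIntegrable (fun t => f t * g t) volume α β :=
  ⟨hf.1.mul_of_top_left (hg.restrict _), hf.2.mul_of_top_left (hg.restrict _)⟩

lemma memLp_top_hatFn (y : ℕ → ℝ) (i : ℕ) : MemLp (hatFn y i) ⊤ :=
  memLp_top_of_bound (measurable_hat3 _ _ _).aestronglyMeasurable 1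
    (ae_of_all _ fun t => abs_hat3_le_one _ _ _ t)

lemma memLp_top_hatDeriv (y : ℕ → ℝ) (i : ℕ) : MemLp (hatDeriv y i) ⊤ :=
  memLp_top_of_bound (measurable_hat3D _ _ _).aestronglyMeasurable _
    (ae_of_all _ fun t => abs_hat3D_le _ _ _ t)

lemma integral_mul_finset_sum {f : ℝ → ℝ} {g : ι → ℝ → ℝ} (hf : IntervalIntegrable f volume α β)
    (hg : ∀ i ∈ s, MemLp (g i) ⊤) :
    ∫ t in α..β, f t * ∑ i ∈ s, q i * g i t = ∑ i ∈ s, q i * ∫ t in α..β, f t * g i t := by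
  simp_rw [Finset.mul_sum, mul_left_comm (f _)]
  rw [intervalIntegral.integral_finsetSum fun i hi => (hf.mul_memLp_top (hg i hi)).const_mul _]
  simp_rw [intervalIntegral.integral_const_mul]

lemma integral_finset_sum_mul {f : ℝ → ℝ} {g : ι → ℝ → ℝ} (hf : IntervalIntegrable f volume α β)
    (hg : ∀ i ∈ s, MemLp (g i) ⊤) :
    ∫ t in α..β, (∑ i ∈ s, q i * g i t) * f t = ∑ i ∈ s, q i * ∫ t in α..β, g i t * f t := by
  simpa only [mul_comm _ (f _)] using integral_mul_finset_sum (q := q) hf hg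

lemma bform_congr_ae {u uD v vD u' uD' v' vD' : ℝ → ℝ} (hu : u =ᵐ[volume] u')
    (huD : uD =ᵐ[volume] uD') (hv : v =ᵐ[volume] v') (hvD : vD =ᵐ[volume] vD') :
    bform ε b c u uD v vD = bform ε b c u' uD' v' vD' := by
  have key : ∀ {g g' h h' : ℝ → ℝ}, g =ᵐ[volume] g' → h =ᵐ[volume] h' →
      ∫ t in (0:ℝ)..1, g t * h t = ∫ t in (0:ℝ)..1, g' t * h' t := fun hg hh =>
    intervalIntegral.integral_congr_ae ((hg.and hh).mono fun t ht _ => by rw [ht.1, ht.2])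
  simp only [bform, key huD hvD, key hu hvD, key hu hv]

lemma bform_finset_sum_left {u uD : ι → ℝ → ℝ} {v vD : ℝ → ℝ} (hu : ∀ i ∈ s, MemLp (u i) ⊤)
    (huD : ∀ i ∈ s, MemLp (uD i) ⊤) (hv : MemLp v ⊤) (hvD : MemLp vD ⊤) :
    bform ε b c (fun t => ∑ i ∈ s, q i * u i t) (fun t => ∑ i ∈ s, q i * uD i t) v vD
      = ∑ i ∈ s, q i * bform ε b c (u i) (uD i) v vD := by
  simp only [bform]
  rw [integral_finset_sum_mul hv.intervalIntegrable hu,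
    integral_finset_sum_mul hvD.intervalIntegrable hu,
    integral_finset_sum_mul hvD.intervalIntegrable huD]
  simp only [Finset.mul_sum, ← Finset.sum_add_distrib]
  exact Finset.sum_congr rfl fun i _ => by ring

lemma bform_finset_sum_right {u uD : ℝ → ℝ} {v vD : ι → ℝ → ℝ} (hu : MemLp u ⊤)
    (huD : MemLp uD ⊤) (hv : ∀ i ∈ s, MemLp (v i) ⊤) (hvD : ∀ i ∈ s, MemLp (vD i) ⊤) :
    bform ε b c u uD (fun t => ∑ i ∈ s, q i * v i t) (fun t => ∑ i ∈ s, q i * vD i t)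
      = ∑ i ∈ s, q i * bform ε b c u uD (v i) (vD i) := by
  simp only [bform]
  rw [integral_mul_finset_sum hu.intervalIntegrable hv,
    integral_mul_finset_sum hu.intervalIntegrable hvD,
    integral_mul_finset_sum huD.intervalIntegrable hvD]
  simp only [Finset.mul_sum, ← Finset.sum_add_distrib]
  exact Finset.sum_congr rfl fun i _ => by ring

lemma bform_hatFn_eq_zero_of_add_two_le {y : ℕ → ℝ} {N i j : ℕ} (hy : IsGrid y N)
    (hji : j + 2 ≤ i) (hiN : i ≤ N + 1) :
    bform ε b c (hatFn y i) (hatDeriv y i) (hatFn y j) (hatDeriv y j) = 0 := by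
  have hsupp : ∀ t, (hatFn y i t = 0 ∧ hatDeriv y i t = 0) ∨
      (hatFn y j t = 0 ∧ hatDeriv y j t = 0) := fun t => by
    rcases le_or_gt t (y (i - 1)) with ht | ht
    · exact .inl ⟨hatFn_eq_zero_of_le hy (by omega) hiN ht, hatDeriv_eq_zero_of_le hy hiN ht⟩
    · have hj : y (j + 1) ≤ t := (hy.le_of_le (by omega) (by omega)).trans ht.le
      exact .inr ⟨hatFn_eq_zero_of_ge hy (by omega) hj, hatDeriv_eq_zero_of_ge hy (by omega) hj⟩
  have hprod : ∀ {g h : ℝ → ℝ}, (∀ t, g t = 0 ∨ h t = 0) →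
      ∫ t in (0:ℝ)..1, g t * h t = 0 := fun hgh => by
    simp [fun t => mul_eq_zero.2 (hgh t)]
  simp only [bform]
  rw [hprod fun t => (hsupp t).imp (·.2) (·.2), hprod fun t => (hsupp t).imp (·.1) (·.2),
    hprod fun t => (hsupp t).imp (·.1) (·.1)]
  ring

end BilinearForm

section Refinement

variable {x y : ℕ → ℝ} {n m : ℕ}

lemma hatFn_of_agree (hagree : ∀ i ≤ n, y i = x i) {i : ℕ} (hi : i < n) :
    hatFn y i = hatFn x i := by
  unfold hatFn
  rw [hagree (i - 1) (by omega), hagree i hi.le, hagree (i + 1) hi]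

lemma hatDeriv_of_agree (hagree : ∀ i ≤ n, y i = x i) {i : ℕ} (hi : i < n) :
    hatDeriv y i = hatDeriv x i := by
  unfold hatDeriv
  rw [hagree (i - 1) (by omega), hagree i hi.le, hagree (i + 1) hi]

lemma hatFn_eq_sum_refine (hn : 1 ≤ n) (hx : IsGrid x n) (hy : IsGrid y (n + m))
    (hagree : ∀ i ≤ n, y i = x i) (t : ℝ) :
    hatFn x n t = ∑ i ∈ Finset.Icc n (n + m), (1 - y i) / (1 - x n) * hatFn y i t := by
  have hyn : y n = x n := hagree n le_rfl
  have hxn : x n < 1 := hx.2.1 ▸ hx.2.2 n le_rfl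
  rcases le_or_gt t (x n) with ht | ht
  · rw [Finset.sum_eq_single_of_mem n (by simp) fun i hi hin => ?_]
    · rw [hyn, div_self (by linarith), one_mul]
      unfold hatFn
      rw [hagree (n - 1) (by omega), hyn]
      exact hat3_congr_right (hx.le_of_le (by omega) (by omega)) ht
    · simp only [Finset.mem_Icc] at hi
      rw [hatFn_eq_zero_of_le hy (by omega) (by omega)
        (ht.trans (hyn ▸ hy.le_of_le (by omega) (by omega))), mul_zero]
  rcases le_or_gt 1 t with ht₁ | ht₁
  · rw [hatFn_eq_zero_of_ge hx le_rfl (hx.2.1.le.trans ht₁)]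
    refine (Finset.sum_eq_zero fun i hi => ?_).symm
    simp only [Finset.mem_Icc] at hi
    rw [hatFn_eq_zero_of_ge hy hi.2 ((hy.le_of_le (by omega) le_rfl).trans
      (hy.2.1.le.trans ht₁)), mul_zero]
  obtain ⟨j, hnj, hjN, htj⟩ :=
    exists_mem_Ioc_nodes y (a := n) (b := n + m + 1) (by omega) (hyn ▸ ht) (hy.2.1 ▸ ht₁.le)
  -- the coefficient at the extra node `y (n + m + 1) = 1` vanishes
  have hlast : ∑ i ∈ Finset.Icc n (n + m), (1 - y i) / (1 - x n) * hatFn y i t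
      = ∑ i ∈ Finset.Icc n (n + m + 1), (1 - y i) / (1 - x n) * hatFn y i t := by
    rw [Finset.sum_Icc_succ_top (by omega), hy.2.1, sub_self, zero_div, zero_mul, add_zero]
  have hj : y j < y (j + 1) := hy.lt_of_lt (by omega) (by omega)
  rw [hlast, sum_mul_hatFn_of_mem_Ioc hy _ hnj (by omega) htj, hatFn,
    hat3_of_mem_Ioc_right (hx.2.1 ▸ ⟨ht, ht₁.le⟩ : t ∈ Set.Ioc (x n) (x (n + 1))), hx.2.1]
  field_simp [(sub_pos.2 hxn).ne', (sub_pos.2 hj).ne']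
  ring

lemma hatDeriv_eq_sum_refine (hn : 1 ≤ n) (hx : IsGrid x n) (hy : IsGrid y (n + m))
    (hagree : ∀ i ≤ n, y i = x i) {t : ℝ} (ht : t ∉ Set.range y) :
    hatDeriv x n t = ∑ i ∈ Finset.Icc n (n + m), (1 - y i) / (1 - x n) * hatDeriv y i t := by
  have hyn : y n = x n := hagree n le_rfl
  have hxn : x n < 1 := hx.2.1 ▸ hx.2.2 n le_rfl
  rcases le_or_gt t (x n) with htn | htn
  · rw [Finset.sum_eq_single_of_mem n (by simp) fun i hi hin => ?_]
    · rw [hyn, div_self (by linarith), one_mul]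
      unfold hatDeriv
      rw [hagree (n - 1) (by omega), hyn]
      exact hat3D_congr_right htn
    · simp only [Finset.mem_Icc] at hi
      rw [hatDeriv_eq_zero_of_le hy (by omega)
        (htn.trans (hyn ▸ hy.le_of_le (by omega) (by omega))), mul_zero]
  rcases le_or_gt 1 t with ht₁ | ht₁
  · rw [hatDeriv_eq_zero_of_ge hx le_rfl (hx.2.1.le.trans ht₁)]
    refine (Finset.sum_eq_zero fun i hi => ?_).symm
    simp only [Finset.mem_Icc] at hi
    rw [hatDeriv_eq_zero_of_ge hy hi.2 ((hy.le_of_le (by omega) le_rfl).trans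
      (hy.2.1.le.trans ht₁)), mul_zero]
  obtain ⟨j, hnj, hjN, htj⟩ :=
    exists_mem_Ioc_nodes y (a := n) (b := n + m + 1) (by omega) (hyn ▸ htn) (hy.2.1 ▸ ht₁.le)
  have htj' : t ∈ Set.Ioo (y j) (y (j + 1)) :=
    ⟨htj.1, htj.2.lt_of_ne fun h => ht ⟨j + 1, h.symm⟩⟩
  have hlast : ∑ i ∈ Finset.Icc n (n + m), (1 - y i) / (1 - x n) * hatDeriv y i t
      = ∑ i ∈ Finset.Icc n (n + m + 1), (1 - y i) / (1 - x n) * hatDeriv y i t := by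
    rw [Finset.sum_Icc_succ_top (by omega), hy.2.1, sub_self, zero_div, zero_mul, add_zero]
  have hj : y j < y (j + 1) := hy.lt_of_lt (by omega) (by omega)
  rw [hlast, sum_mul_hatDeriv_of_mem_Ioo hy _ hnj (by omega) htj', hatDeriv,
    hat3D_of_mem_Ioo_right (hx.2.1 ▸ ⟨htn, ht₁⟩ : t ∈ Set.Ioo (x n) (x (n + 1))), hx.2.1]
  field_simp [(sub_pos.2 hxn).ne', (sub_pos.2 hj).ne']
  ring

lemma hatDeriv_ae_eq_sum_refine (hn : 1 ≤ n) (hx : IsGrid x n) (hy : IsGrid y (n + m))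
    (hagree : ∀ i ≤ n, y i = x i) :
    hatDeriv x n =ᵐ[volume]
      fun t => ∑ i ∈ Finset.Icc n (n + m), (1 - y i) / (1 - x n) * hatDeriv y i t :=
  ((Set.countable_range y).ae_notMem volume).mono fun _ ht =>
    hatDeriv_eq_sum_refine hn hx hy hagree ht

end Refinement

section Galerkin

variable {x y : ℕ → ℝ} {n m : ℕ} {ε b c : ℝ} {f : ℝ → ℝ} {w : ℕ → ℝ}

lemma bform_refine_right (hn : 1 ≤ n) (hx : IsGrid x n) (hy : IsGrid y (n + m))
    (hagree : ∀ i ≤ n, y i = x i) {u uD : ℝ → ℝ} (hu : MemLp u ⊤) (huD : MemLp uD ⊤) :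
    bform ε b c u uD (hatFn x n) (hatDeriv x n)
      = ∑ i ∈ Finset.Icc n (n + m),
          (1 - y i) / (1 - x n) * bform ε b c u uD (hatFn y i) (hatDeriv y i) := by
  rw [bform_congr_ae .rfl .rfl (.of_forall (hatFn_eq_sum_refine hn hx hy hagree))
    (hatDeriv_ae_eq_sum_refine hn hx hy hagree)]
  exact bform_finset_sum_right hu huD (fun i _ => memLp_top_hatFn y i)
    (fun i _ => memLp_top_hatDeriv y i)

lemma bform_refine_left (hn : 1 ≤ n) (hx : IsGrid x n) (hy : IsGrid y (n + m))
    (hagree : ∀ i ≤ n, y i = x i) {v vD : ℝ → ℝ} (hv : MemLp v ⊤) (hvD : MemLp vD ⊤) :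
    bform ε b c (hatFn x n) (hatDeriv x n) v vD
      = ∑ i ∈ Finset.Icc n (n + m),
          (1 - y i) / (1 - x n) * bform ε b c (hatFn y i) (hatDeriv y i) v vD := by
  rw [bform_congr_ae (.of_forall (hatFn_eq_sum_refine hn hx hy hagree))
    (hatDeriv_ae_eq_sum_refine hn hx hy hagree) .rfl .rfl]
  exact bform_finset_sum_left (fun i _ => memLp_top_hatFn y i)
    (fun i _ => memLp_top_hatDeriv y i) hv hvD

lemma load_refine (hn : 1 ≤ n) (hx : IsGrid x n) (hy : IsGrid y (n + m))
    (hagree : ∀ i ≤ n, y i = x i) (hf : IntervalIntegrable f volume 0 1) :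
    load f x n = ∑ i ∈ Finset.Icc n (n + m), (1 - y i) / (1 - x n) * load f y i := by
  simp_rw [load, hatFn_eq_sum_refine hn hx hy hagree]
  exact integral_mul_finset_sum hf fun i _ => memLp_top_hatFn y i

lemma sum_coarse_bform_eq (hn : 1 ≤ n) (hx : IsGrid x n) (hy : IsGrid y (n + m))
    (hagree : ∀ i ≤ n, y i = x i) (w : ℕ → ℝ) {v vD : ℝ → ℝ} (hv : MemLp v ⊤)
    (hvD : MemLp vD ⊤) :
    ∑ i ∈ Finset.Icc 1 n, w i * bform ε b c (hatFn x i) (hatDeriv x i) v vD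
      = ∑ i ∈ Finset.Icc 1 (n + m), w i * bform ε b c (hatFn y i) (hatDeriv y i) v vD
        - ∑ k ∈ Finset.Icc 1 m, (w (n + k) - (1 - y (n + k)) / (1 - x n) * w n)
            * bform ε b c (hatFn y (n + k)) (hatDeriv y (n + k)) v vD := by
  have hxn : x n < 1 := hx.2.1 ▸ hx.2.2 n le_rfl
  have hcoarse : ∀ i ∈ Finset.Ico 1 n, w i * bform ε b c (hatFn x i) (hatDeriv x i) v vD
      = w i * bform ε b c (hatFn y i) (hatDeriv y i) v vD := fun i hi => by
    rw [hatFn_of_agree hagree (Finset.mem_Ico.1 hi).2,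
      hatDeriv_of_agree hagree (Finset.mem_Ico.1 hi).2]
  have hlast : bform ε b c (hatFn x n) (hatDeriv x n) v vD
      = bform ε b c (hatFn y n) (hatDeriv y n) v vD
        + ∑ k ∈ Finset.Icc 1 m, (1 - y (n + k)) / (1 - x n)
            * bform ε b c (hatFn y (n + k)) (hatDeriv y (n + k)) v vD := by
    rw [bform_refine_left hn hx hy hagree hv hvD, Finset.sum_Icc_self_add, hagree n le_rfl,
      div_self (by linarith), one_mul]
  rw [← Finset.Ico_add_one_right_eq_Icc, Finset.sum_Ico_succ_top hn, Finset.sum_congr rfl hcoarse,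
    hlast, ← Finset.Ico_add_one_right_eq_Icc 1 (n + m),
    ← Finset.sum_Ico_consecutive _ hn (by omega : n ≤ n + m + 1),
    Finset.Ico_add_one_right_eq_Icc, Finset.sum_Icc_self_add]
  have hdefect : ∑ k ∈ Finset.Icc 1 m, (w (n + k) - (1 - y (n + k)) / (1 - x n) * w n)
        * bform ε b c (hatFn y (n + k)) (hatDeriv y (n + k)) v vD
      = ∑ k ∈ Finset.Icc 1 m, w (n + k) * bform ε b c (hatFn y (n + k)) (hatDeriv y (n + k)) v vD
        - w n * ∑ k ∈ Finset.Icc 1 m, (1 - y (n + k)) / (1 - x n)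
            * bform ε b c (hatFn y (n + k)) (hatDeriv y (n + k)) v vD := by
    rw [Finset.mul_sum, ← Finset.sum_sub_distrib]
    exact Finset.sum_congr rfl fun _ _ => by ring
  rw [hdefect]
  ring

lemma sum_refined_bform_coarse_test (hn : 1 ≤ n) (hx : IsGrid x n) (hy : IsGrid y (n + m))
    (hagree : ∀ i ≤ n, y i = x i) (hf : IntervalIntegrable f volume 0 1)
    (hw : IsGalerkinSol ε b c f y (n + m) w) {j : ℕ} (hj : 1 ≤ j) (hjn : j ≤ n) :
    ∑ i ∈ Finset.Icc 1 (n + m),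
        w i * bform ε b c (hatFn y i) (hatDeriv y i) (hatFn x j) (hatDeriv x j)
      = load f x j := by
  rcases hjn.lt_or_eq with hjn | rfl
  · rw [← hatFn_of_agree hagree hjn, ← hatDeriv_of_agree hagree hjn, hw j hj (by omega), load,
      load, hatFn_of_agree hagree hjn]
  · simp_rw [bform_refine_right hn hx hy hagree (memLp_top_hatFn y _) (memLp_top_hatDeriv y _),
      Finset.mul_sum]
    rw [Finset.sum_comm, load_refine hn hx hy hagree hf]
    refine Finset.sum_congr rfl fun l hl => ?_
    rw [Finset.mem_Icc] at hl
    rw [← hw l (by omega) hl.2, Finset.mul_sum]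
    exact Finset.sum_congr rfl fun i _ => by ring

lemma sum_coarse_bform_coarse_test (hn : 1 ≤ n) (hx : IsGrid x n) (hy : IsGrid y (n + m))
    (hagree : ∀ i ≤ n, y i = x i) (hf : IntervalIntegrable f volume 0 1)
    (hw : IsGalerkinSol ε b c f y (n + m) w) {j : ℕ} (hj : 1 ≤ j) (hjn : j ≤ n) :
    ∑ i ∈ Finset.Icc 1 n, w i * bform ε b c (hatFn x i) (hatDeriv x i) (hatFn x j) (hatDeriv x j)
      = load f x j - if j = n then
          ∑ k ∈ Finset.Icc 1 m, (w (n + k) - (1 - y (n + k)) / (1 - x n) * w n)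
            * bform ε b c (hatFn y (n + k)) (hatDeriv y (n + k)) (hatFn x n) (hatDeriv x n)
        else 0 := by
  rw [sum_coarse_bform_eq hn hx hy hagree w (memLp_top_hatFn x j) (memLp_top_hatDeriv x j),
    sum_refined_bform_coarse_test hn hx hy hagree hf hw hj hjn]
  split_ifs with hjn'
  · rw [hjn']
  · rw [Finset.sum_eq_zero fun k hk => ?_]
    rw [Finset.mem_Icc] at hk
    rw [← hatFn_of_agree hagree (by omega), ← hatDeriv_of_agree hagree (by omega),
      bform_hatFn_eq_zero_of_add_two_le hy (by omega) (by omega), mul_zero]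

lemma stiff_mulVec_apply (ε b c : ℝ) (x : ℕ → ℝ) (n : ℕ) (w : ℕ → ℝ) (j : Fin n) :
    (stiff ε b c x n *ᵥ fun i : Fin n => w (i + 1)) j
      = ∑ i ∈ Finset.Icc 1 n,
          w i * bform ε b c (hatFn x i) (hatDeriv x i) (hatFn x (j + 1)) (hatDeriv x (j + 1)) := by
  simp only [Matrix.mulVec, dotProduct, stiff]
  rw [Fin.sum_univ_eq_sum_range (fun i => bform ε b c (hatFn x (i + 1)) (hatDeriv x (i + 1))
      (hatFn x (j + 1)) (hatDeriv x (j + 1)) * w (i + 1)), Finset.range_eq_Ico,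
    Finset.sum_Ico_add' (fun i => bform ε b c (hatFn x i) (hatDeriv x i) (hatFn x (j + 1))
      (hatDeriv x (j + 1)) * w i), zero_add, Finset.Ico_add_one_right_eq_Icc]
  exact Finset.sum_congr rfl fun i _ => mul_comm _ _

lemma Matrix.sub_eq_smul_inv_mulVec {ι R : Type*} [Fintype ι] [DecidableEq ι] [CommRing R]
    {A : Matrix ι ι R} (hA : IsUnit A.det) {u v F e : ι → R} {C : R} (hu : A *ᵥ u = F)
    (hv : A *ᵥ v = F - C • e) : u - v = C • (A⁻¹ *ᵥ e) :=
  calc u - v = (A⁻¹ * A) *ᵥ (u - v) := by rw [Matrix.nonsing_inv_mul A hA, Matrix.one_mulVec]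
    _ = C • (A⁻¹ *ᵥ e) := by
      rw [← Matrix.mulVec_mulVec, Matrix.mulVec_sub, hu, hv, sub_sub_cancel, Matrix.mulVec_smul]

theorem coarse_sub_refined_eq_smul (hn : 1 ≤ n) (hx : IsGrid x n) (hy : IsGrid y (n + m))
    (hagree : ∀ i ≤ n, y i = x i) (hf : ContinuousOn f (Set.Icc 0 1))
    {A : Matrix (Fin n) (Fin n) ℝ} (hA : A = stiff ε b c x n) (hAdet : A.det ≠ 0) {Un : ℕ → ℝ}
    (hUn : A *ᵥ (fun j : Fin n => Un ((j : ℕ) + 1)) = fun j : Fin n => load f x ((j : ℕ) + 1))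
    (hw : IsGalerkinSol ε b c f y (n + m) w) :
    (fun j : Fin n => Un ((j : ℕ) + 1) - w ((j : ℕ) + 1))
      = (∑ k ∈ Finset.Icc 1 m, (w (n + k) - (1 - y (n + k)) / (1 - x n) * w n)
            * bform ε b c (hatFn y (n + k)) (hatDeriv y (n + k)) (hatFn x n) (hatDeriv x n))
          • (A⁻¹ *ᵥ (fun j : Fin n => if (j : ℕ) = n - 1 then 1 else 0)) := by
  refine Matrix.sub_eq_smul_inv_mulVec (isUnit_iff_ne_zero.2 hAdet) hUn (funext fun j => ?_)
  rw [hA, stiff_mulVec_apply, sum_coarse_bform_coarse_test hn hx hy hagree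
    (hf.intervalIntegrable_of_Icc zero_le_one) hw (by omega) (by omega)]
  simp only [Pi.sub_apply, Pi.smul_apply, smul_eq_mul]
  by_cases hj : (j : ℕ) + 1 = n
  · rw [if_pos hj, if_pos (by omega), mul_one]
  · rw [if_neg hj, if_neg (by omega), mul_zero]

end Galerkin

section Crossing

variable {α β U₁ U₂ w₁ w₂ C v₁ v₂ : ℝ}

lemma crossing_mem_Ioo (hαβ : α < β) (h₁ : U₁ - w₁ = C * v₁) (h₂ : U₂ - w₂ = C * v₂)
    (hs : (U₁ - w₁) * (U₂ - w₂) < 0) : α + (β - α) * (v₁ / (v₁ - v₂)) ∈ Set.Ioo α β := by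
  rw [h₁, h₂] at hs
  have hv : v₁ * v₂ < 0 := by nlinarith [sq_nonneg C]
  have hr : 0 < v₁ / (v₁ - v₂) ∧ v₁ / (v₁ - v₂) < 1 := by
    rcases lt_or_gt_of_ne (left_ne_zero_of_mul hv.ne) with h | h
    · have : 0 < v₂ := by nlinarith
      exact ⟨div_pos_of_neg_of_neg h (by linarith),
        (div_lt_one_of_neg (by linarith)).2 (by linarith)⟩
    · have : v₂ < 0 := by nlinarith
      exact ⟨div_pos h (by linarith), (div_lt_one (by linarith)).2 (by linarith)⟩
  constructor <;> nlinarith [hr.1, hr.2]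

lemma affInterp_eq_affInterp_iff (hαβ : α < β) (h₁ : U₁ - w₁ = C * v₁) (h₂ : U₂ - w₂ = C * v₂)
    (hs : (U₁ - w₁) * (U₂ - w₂) < 0) (t : ℝ) :
    affInterp α β U₁ U₂ t = affInterp α β w₁ w₂ t ↔ t = α + (β - α) * (v₁ / (v₁ - v₂)) := by
  rw [h₁, h₂] at hs
  have hC : C ≠ 0 := by rintro rfl; simp at hs
  have hv : v₁ - v₂ ≠ 0 := fun h => by
    rw [show v₂ = v₁ by linarith] at hs
    nlinarith [mul_self_nonneg (C * v₁)]
  have hβα : β - α ≠ 0 := by linarith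
  have hdiff : affInterp α β U₁ U₂ t - affInterp α β w₁ w₂ t
      = C * (v₁ - (v₁ - v₂) * ((t - α) / (β - α))) := by
    rw [affInterp, affInterp, show U₁ = w₁ + C * v₁ by linarith, show U₂ = w₂ + C * v₂ by linarith]
    ring
  have hline : ∀ r, t = α + (β - α) * r ↔ (t - α) / (β - α) = r := fun r => by
    rw [div_eq_iff hβα]
    constructor <;> intro h <;> linarith
  rw [← sub_eq_zero, hdiff, mul_eq_zero, or_iff_right hC, sub_eq_zero, hline, eq_div_iff hv]
  constructor <;> intro h <;> linarith

end Crossing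

lemma sub_eq_mul_of_eq_smul {n : ℕ} {U z : ℕ → ℝ} {C : ℝ} {v : Fin n → ℝ}
    (h : (fun j : Fin n => U ((j : ℕ) + 1) - z ((j : ℕ) + 1)) = C • v) {j : ℕ} (hj : 1 ≤ j)
    (hjn : j ≤ n) : U j - z j = C * v ⟨j - 1, by omega⟩ := by
  simpa [Nat.sub_add_cancel hj] using congrFun h ⟨j - 1, by omega⟩

theorem statement8_general (n m m' : ℕ) (hn : 1 ≤ n)
    (x y y' : ℕ → ℝ) (ε b c : ℝ) (f : ℝ → ℝ)
    (hf : ContinuousOn f (Set.Icc 0 1))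
    (hx : IsGrid x n) (hy : IsGrid y (n + m)) (hy' : IsGrid y' (n + m'))
    (hagree : ∀ i ≤ n, y i = x i) (hagree' : ∀ i ≤ n, y' i = x i)
    (A : Matrix (Fin n) (Fin n) ℝ) (hA : A = stiff ε b c x n) (hAdet : A.det ≠ 0)
    (Un : ℕ → ℝ)
    (hUn : A *ᵥ (fun j : Fin n => Un ((j : ℕ) + 1))
      = fun j : Fin n => load f x ((j : ℕ) + 1))
    (w w' : ℕ → ℝ)
    (hw : IsGalerkinSol ε b c f y (n + m) w)
    (hw' : IsGalerkinSol ε b c f y' (n + m') w') :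
    ((fun j : Fin n => Un ((j : ℕ) + 1) - w ((j : ℕ) + 1))
        = (∑ k ∈ Finset.Icc 1 m,
              (w (n + k) - (1 - y (n + k)) / (1 - x n) * w n)
                * bform ε b c (hatFn y (n + k)) (hatDeriv y (n + k))
                    (hatFn x n) (hatDeriv x n))
            • (A⁻¹ *ᵥ (fun j : Fin n => if (j : ℕ) = n - 1 then 1 else 0))) ∧
    ((fun j : Fin n => Un ((j : ℕ) + 1) - w' ((j : ℕ) + 1))
        = (∑ k ∈ Finset.Icc 1 m',
              (w' (n + k) - (1 - y' (n + k)) / (1 - x n) * w' n)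
                * bform ε b c (hatFn y' (n + k)) (hatDeriv y' (n + k))
                    (hatFn x n) (hatDeriv x n))
            • (A⁻¹ *ᵥ (fun j : Fin n => if (j : ℕ) = n - 1 then 1 else 0))) ∧
    (∀ i : ℕ, 2 ≤ i → i ≤ n →
      (Un (i - 1) - w (i - 1)) * (Un i - w i) < 0 →
      (Un (i - 1) - w' (i - 1)) * (Un i - w' i) < 0 →
      ∃ t ∈ Set.Ioo (x (i - 1)) (x i),
        affInterp (x (i - 1)) (x i) (Un (i - 1)) (Un i) t
          = affInterp (x (i - 1)) (x i) (w (i - 1)) (w i) t ∧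
        affInterp (x (i - 1)) (x i) (Un (i - 1)) (Un i) t
          = affInterp (x (i - 1)) (x i) (w' (i - 1)) (w' i) t ∧
        ∀ t' ∈ Set.Ioo (x (i - 1)) (x i),
          (affInterp (x (i - 1)) (x i) (Un (i - 1)) (Un i) t'
              = affInterp (x (i - 1)) (x i) (w (i - 1)) (w i) t' ∨
            affInterp (x (i - 1)) (x i) (Un (i - 1)) (Un i) t'
              = affInterp (x (i - 1)) (x i) (w' (i - 1)) (w' i) t') → t' = t) := by
  have hdiff := coarse_sub_refined_eq_smul hn hx hy hagree hf hA hAdet hUn hw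
  have hdiff' := coarse_sub_refined_eq_smul hn hx hy' hagree' hf hA hAdet hUn hw'
  refine ⟨hdiff, hdiff', fun i hi hin hs hs' => ?_⟩
  have hαβ : x (i - 1) < x i := hx.lt_of_lt (by omega) (by omega)
  have h₁ := sub_eq_mul_of_eq_smul hdiff (j := i - 1) (by omega) (by omega)
  have h₂ := sub_eq_mul_of_eq_smul hdiff (j := i) (by omega) hin
  have h₁' := sub_eq_mul_of_eq_smul hdiff' (j := i - 1) (by omega) (by omega)
  have h₂' := sub_eq_mul_of_eq_smul hdiff' (j := i) (by omega) hin
  refine ⟨_, crossing_mem_Ioo hαβ h₁ h₂ hs,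
    (affInterp_eq_affInterp_iff hαβ h₁ h₂ hs _).2 rfl,
    (affInterp_eq_affInterp_iff hαβ h₁' h₂' hs' _).2 rfl, fun t _ ht => ?_⟩
  exact ht.elim (affInterp_eq_affInterp_iff hαβ h₁ h₂ hs t).1
    (affInterp_eq_affInterp_iff hαβ h₁' h₂' hs' t).1

/-- Theorem 3.2: if `w` solves the refined Galerkin system on the grid `y`
obtained from `x` by inserting `m` points `s_k = y (n+k)` in `(xₙ, 1)`, then
`Uⁿ − (u₁, …, uₙ) = C·A⁻¹eₙ` with `C = Σ_{k=1}^m (u_{s_k} − p_k·uₙ)·a(φ_{s_k}, φₙ)` and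
`p_k = (1 − s_k)/(1 − xₙ)`; the same holds for a second refinement `(y', m', w')`, and
consequently for each `2 ≤ i ≤ n` where the nodal differences change sign (for both
refinements) the intersection point of the two piecewise linear solutions in
`(x_{i−1}, xᵢ)` is independent of `m` and of the distribution of the added points. -/
theorem statement8 (n m m' : ℕ) (hn : 1 ≤ n) (hm : 1 ≤ m) (hm' : 1 ≤ m')
    (x y y' : ℕ → ℝ) (ε b c : ℝ) (f : ℝ → ℝ)
    (hf : ContinuousOn f (Set.Icc 0 1))
    (hx : IsGrid x n) (hy : IsGrid y (n + m)) (hy' : IsGrid y' (n + m'))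
    (hagree : ∀ i ≤ n, y i = x i) (hagree' : ∀ i ≤ n, y' i = x i)
    (A : Matrix (Fin n) (Fin n) ℝ) (hA : A = stiff ε b c x n) (hAdet : A.det ≠ 0)
    (Un : ℕ → ℝ)
    (hUn : A *ᵥ (fun j : Fin n => Un ((j : ℕ) + 1))
      = fun j : Fin n => load f x ((j : ℕ) + 1))
    (w w' : ℕ → ℝ)
    (hw : IsGalerkinSol ε b c f y (n + m) w)
    (hw' : IsGalerkinSol ε b c f y' (n + m') w') :
    ((fun j : Fin n => Un ((j : ℕ) + 1) - w ((j : ℕ) + 1))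
        = (∑ k ∈ Finset.Icc 1 m,
              (w (n + k) - (1 - y (n + k)) / (1 - x n) * w n)
                * bform ε b c (hatFn y (n + k)) (hatDeriv y (n + k))
                    (hatFn x n) (hatDeriv x n))
            • (A⁻¹ *ᵥ (fun j : Fin n => if (j : ℕ) = n - 1 then 1 else 0))) ∧
    ((fun j : Fin n => Un ((j : ℕ) + 1) - w' ((j : ℕ) + 1))
        = (∑ k ∈ Finset.Icc 1 m',
              (w' (n + k) - (1 - y' (n + k)) / (1 - x n) * w' n)
                * bform ε b c (hatFn y' (n + k)) (hatDeriv y' (n + k))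
                    (hatFn x n) (hatDeriv x n))
            • (A⁻¹ *ᵥ (fun j : Fin n => if (j : ℕ) = n - 1 then 1 else 0))) ∧
    (∀ i : ℕ, 2 ≤ i → i ≤ n →
      (Un (i - 1) - w (i - 1)) * (Un i - w i) < 0 →
      (Un (i - 1) - w' (i - 1)) * (Un i - w' i) < 0 →
      ∃ t ∈ Set.Ioo (x (i - 1)) (x i),
        affInterp (x (i - 1)) (x i) (Un (i - 1)) (Un i) t
          = affInterp (x (i - 1)) (x i) (w (i - 1)) (w i) t ∧
        affInterp (x (i - 1)) (x i) (Un (i - 1)) (Un i) t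
          = affInterp (x (i - 1)) (x i) (w' (i - 1)) (w' i) t ∧
        ∀ t' ∈ Set.Ioo (x (i - 1)) (x i),
          (affInterp (x (i - 1)) (x i) (Un (i - 1)) (Un i) t'
              = affInterp (x (i - 1)) (x i) (w (i - 1)) (w i) t' ∨
            affInterp (x (i - 1)) (x i) (Un (i - 1)) (Un i) t'
              = affInterp (x (i - 1)) (x i) (w' (i - 1)) (w' i) t') → t' = t) :=
  statement8_general n m m' hn x y y' ε b c f hf hx hy hy' hagree hagree' A hA hAdet Un hUn w w' hw
    hw'
end

section
/- (Theorem 4.1.) Let 0 = x₀ < ⋯ < xₙ < ŝ₁ < 1 be a grid, ε, b, c reals, f : [0,1] → ℝ continuous. Let φ₁, …, φ_{n−1} be the hat functions at x₁, …, x_{n−1}, φ̃ₙ the hat at xₙ (support [x_{n−1}, ŝ₁]), and φ_{ŝ₁} the hat at ŝ₁ (support [xₙ, 1]). Assume the key entry vanishes: a(φ_{ŝ₁}, φ̃ₙ) = 0. Let (û₁, …, ûₙ, û_{ŝ₁}) solve the full refined Galerkin system (a-pairing against each of φ₁, …, φ_{n−1}, φ̃ₙ, φ_{ŝ₁} equals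 the corresponding load). Let g be ANY real number (e.g. g = u(ŝ₁) for the exact solution u), and let (w₁, …, wₙ) solve the Galerkin system of the auxiliary Dirichlet problem on [0, ŝ₁] with boundary value g at ŝ₁: for j = 1, …, n−1, Σᵢ wᵢ a(φᵢ, φⱼ) + wₙ a(φ̃ₙ, φⱼ) = ∫₀¹ f·φⱼ, and Σ_{i≤n−1} wᵢ a(φᵢ, φ̃ₙ) + wₙ a(φ̃ₙ, φ̃ₙ) = ∫₀¹ f·φ̃ₙ − a(φ_{ŝ₁}, φ̃ₙ)·g. If the n×n matrix of these systems (entries a(φⱼ, φᵢ) with φₙ replaced by φ̃ₙ) is invertible, then wᵢ = ûᵢ for all i = 1, …, n; that is, the finite element solution on the full grid coincides on [0, xₙ] with the finite element solution of the auxiliary problem, regardless of the boundary value g. -/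
open Matrix MeasureTheory

/-!
The basis function `φ_{ŝ₁}` is supported on `[xₙ, 1]`, so it is `a`-orthogonal to
`φ₁, …, φ_{n-1}`, and by hypothesis also to `φ̃ₙ`. Hence the coefficient `û_{ŝ₁}` drops out of
the first `n` equations of the refined system, and the boundary term `a(φ_{ŝ₁}, φ̃ₙ)·g` of the
auxiliary system vanishes: `û` and `w` solve the same nonsingular `n × n` system.
-/

lemma hat3_eq_zero_of_le_left {l m r t : ℝ} (hlm : l < m) (ht : t ≤ l) : hat3 l m r t = 0 := by
  unfold hat3
  split_ifs with h₁ h₂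
  · rw [le_antisymm ht h₁.1, sub_self, zero_div]
  · linarith [h₂.1]
  · rfl

lemma hat3_eq_zero_of_right_lt {l m r t : ℝ} (hmr : m ≤ r) (ht : r < t) : hat3 l m r t = 0 := by
  unfold hat3
  split_ifs with h₁ h₂
  · linarith [h₁.2]
  · linarith [h₂.2]
  · rfl

lemma hat3D_eq_zero_of_le_left {l m r t : ℝ} (hlm : l ≤ m) (ht : t ≤ l) : hat3D l m r t = 0 := by
  unfold hat3D
  split_ifs with h₁ h₂
  · linarith [h₁.1]
  · linarith [h₂.1]
  · rfl

lemma hat3D_eq_zero_of_right_le {l m r t : ℝ} (hmr : m ≤ r) (ht : r ≤ t) :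
    hat3D l m r t = 0 := by
  unfold hat3D
  split_ifs with h₁ h₂
  · linarith [h₁.2]
  · linarith [h₂.2]
  · rfl

lemma bform_eq_zero_of_separated {ε b c s : ℝ} {u uD v vD : ℝ → ℝ}
    (hu : ∀ t ≤ s, u t = 0) (huD : ∀ t ≤ s, uD t = 0)
    (hv : ∀ t, s < t → v t = 0) (hvD : ∀ t, s < t → vD t = 0) :
    bform ε b c u uD v vD = 0 := by
  have product_eq_zero {p q : ℝ → ℝ} (hp : ∀ t ≤ s, p t = 0) (hq : ∀ t, s < t → q t = 0)
      (t : ℝ) : p t * q t = 0 := by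
    rcases le_or_gt t s with ht | ht
    · simp [hp t ht]
    · simp [hq t ht]
  simp only [bform, product_eq_zero huD hvD, product_eq_zero hu hvD, product_eq_zero hu hv,
    intervalIntegral.integral_zero, mul_zero, add_zero]

lemma bform_hatFn_eq_zero_of_le (ε b c : ℝ) {y : ℕ → ℝ} {i j : ℕ}
    (hi : y (i - 1) < y i) (hj : y j ≤ y (j + 1)) (hsep : y (j + 1) ≤ y (i - 1)) :
    bform ε b c (hatFn y i) (hatDeriv y i) (hatFn y j) (hatDeriv y j) = 0 :=
  bform_eq_zero_of_separated (s := y (i - 1))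
    (fun _ ht => hat3_eq_zero_of_le_left hi ht) (fun _ ht => hat3D_eq_zero_of_le_left hi.le ht)
    (fun _ ht => hat3_eq_zero_of_right_lt hj (hsep.trans_lt ht))
    (fun _ ht => hat3D_eq_zero_of_right_le hj (hsep.trans ht.le))

lemma IsGrid.monotoneOn {y : ℕ → ℝ} {N : ℕ} (hy : IsGrid y N) :
    MonotoneOn y (Set.Iic (N + 1)) :=
  monotoneOn_of_le_succ Set.ordConnected_Iic fun i _ _ hi =>
    (hy.2.2 i (by simpa [Order.succ_eq_add_one] using hi)).le

lemma IsGrid.bform_hatFn_succ_eq_zero {ε b c : ℝ} {y : ℕ → ℝ} {n : ℕ} (hy : IsGrid y (n + 1))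
    (hkey : bform ε b c (hatFn y (n + 1)) (hatDeriv y (n + 1)) (hatFn y n) (hatDeriv y n) = 0)
    {j : ℕ} (hj : j ≤ n) :
    bform ε b c (hatFn y (n + 1)) (hatDeriv y (n + 1)) (hatFn y j) (hatDeriv y j) = 0 := by
  rcases hj.lt_or_eq with hj | rfl
  · have mono {k l : ℕ} (hkl : k ≤ l) (hl : l ≤ n + 2) : y k ≤ y l :=
      hy.monotoneOn (Set.mem_Iic.2 (by omega)) (Set.mem_Iic.2 hl) hkl
    exact bform_hatFn_eq_zero_of_le ε b c (hy.2.2 n (by omega)) (mono (by omega) (by omega))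
      (mono (by omega) (by omega))
  · exact hkey

lemma sum_Icc_one_eq_sum_fin {M : Type*} [AddCommMonoid M] (n : ℕ) (F : ℕ → M) :
    ∑ i ∈ Finset.Icc 1 n, F i = ∑ i : Fin n, F (i + 1) := by
  rw [Fin.sum_univ_eq_sum_range (fun i => F (i + 1)), ← Finset.Ico_add_one_right_eq_Icc,
    Finset.sum_Ico_eq_sum_range, Nat.add_sub_cancel]
  simp only [add_comm 1]

lemma eq_of_sum_mul_eq_of_det_ne_zero {R : Type*} [CommRing R] [NoZeroDivisors R] {n : ℕ}
    (B : ℕ → ℕ → R) (hdet : (Matrix.of fun i j : Fin n => B (j + 1) (i + 1)).det ≠ 0)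
    {v w : ℕ → R}
    (h : ∀ j, 1 ≤ j → j ≤ n →
      ∑ i ∈ Finset.Icc 1 n, v i * B i j = ∑ i ∈ Finset.Icc 1 n, w i * B i j) :
    ∀ i, 1 ≤ i → i ≤ n → v i = w i := by
  set d : Fin n → R := fun i => v (i + 1) - w (i + 1)
  have hd : (Matrix.of fun i j : Fin n => B (j + 1) (i + 1)) *ᵥ d = 0 := by
    funext j
    have hj := h (j + 1) (by omega) (by omega)
    rw [sum_Icc_one_eq_sum_fin, sum_Icc_one_eq_sum_fin] at hj
    simp only [mulVec, dotProduct, of_apply, Pi.zero_apply, d, mul_sub, Finset.sum_sub_distrib]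
    simp only [mul_comm (B _ _)]
    exact sub_eq_zero.2 hj
  intro i hi₁ hi₂
  have := congrFun (eq_zero_of_mulVec_eq_zero hdet hd) ⟨i - 1, by omega⟩
  simp only [d, Nat.sub_add_cancel hi₁, Pi.zero_apply] at this
  exact sub_eq_zero.1 this

theorem statement13_general (n : ℕ) (y : ℕ → ℝ) (ε b c : ℝ) (f : ℝ → ℝ)
    (hy : IsGrid y (n + 1))
    (hkey : bform ε b c (hatFn y (n + 1)) (hatDeriv y (n + 1))
        (hatFn y n) (hatDeriv y n) = 0)
    (w : ℕ → ℝ) (hw : IsGalerkinSol ε b c f y (n + 1) w)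
    (g : ℝ) (v : ℕ → ℝ)
    (hv1 : ∀ j, 1 ≤ j → j ≤ n - 1 →
      (∑ i ∈ Finset.Icc 1 n,
          v i * bform ε b c (hatFn y i) (hatDeriv y i) (hatFn y j) (hatDeriv y j))
        = load f y j)
    (hv2 : (∑ i ∈ Finset.Icc 1 n,
          v i * bform ε b c (hatFn y i) (hatDeriv y i) (hatFn y n) (hatDeriv y n))
        = load f y n
          - bform ε b c (hatFn y (n + 1)) (hatDeriv y (n + 1))
              (hatFn y n) (hatDeriv y n) * g)
    (hdet : (stiff ε b c y n).det ≠ 0) :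
    ∀ i, 1 ≤ i → i ≤ n → v i = w i := by
  refine eq_of_sum_mul_eq_of_det_ne_zero
    (fun i j => bform ε b c (hatFn y i) (hatDeriv y i) (hatFn y j) (hatDeriv y j)) hdet ?_
  intro j hj₁ hjn
  have hwj := hw j hj₁ (by omega)
  rw [Finset.sum_Icc_succ_top (by omega), hy.bform_hatFn_succ_eq_zero hkey hjn, mul_zero,
    add_zero] at hwj
  rw [hwj]
  rcases hjn.lt_or_eq with hjn | rfl
  · exact hv1 j hj₁ (by omega)
  · rwa [hkey, zero_mul, sub_zero] at hv2

/-- Theorem 4.1: on the grid `0 = y₀ < y₁ < ⋯ < yₙ < y_{n+1} = ŝ₁ < y_{n+2} = 1`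
(the `xᵢ` being `y i` for `i ≤ n`), assume the key stiffness entry `a(φ_{ŝ₁}, φ̃ₙ)` vanishes.
If `(û₁, …, ûₙ, û_{ŝ₁}) = w` solves the full refined Galerkin system, `g` is any real number,
and `(w₁, …, wₙ) = v` solves the Galerkin system of the auxiliary Dirichlet problem on
`[0, ŝ₁]` with boundary value `g` at `ŝ₁`, then (provided the `n×n` system matrix is
invertible) `vᵢ = ûᵢ` for all `i = 1, …, n`, regardless of `g`. -/
theorem statement13 (n : ℕ) (hn : 1 ≤ n) (y : ℕ → ℝ) (ε b c : ℝ) (f : ℝ → ℝ)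
    (hf : ContinuousOn f (Set.Icc 0 1))
    (hy : IsGrid y (n + 1))
    (hkey : bform ε b c (hatFn y (n + 1)) (hatDeriv y (n + 1))
        (hatFn y n) (hatDeriv y n) = 0)
    (w : ℕ → ℝ) (hw : IsGalerkinSol ε b c f y (n + 1) w)
    (g : ℝ) (v : ℕ → ℝ)
    (hv1 : ∀ j, 1 ≤ j → j ≤ n - 1 →
      (∑ i ∈ Finset.Icc 1 n,
          v i * bform ε b c (hatFn y i) (hatDeriv y i) (hatFn y j) (hatDeriv y j))
        = load f y j)
    (hv2 : (∑ i ∈ Finset.Icc 1 n,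
          v i * bform ε b c (hatFn y i) (hatDeriv y i) (hatFn y n) (hatDeriv y n))
        = load f y n
          - bform ε b c (hatFn y (n + 1)) (hatDeriv y (n + 1))
              (hatFn y n) (hatDeriv y n) * g)
    (hdet : (stiff ε b c y n).det ≠ 0) :
    ∀ i, 1 ≤ i → i ≤ n → v i = w i :=
  statement13_general n y ε b c f hy hkey w hw g v hv1 hv2 hdet
end
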